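/- Let B be an ordered category with finitely many objects and finite hom-sets whose additive cover ac(B) has binary products, and let I be an interior structure of B contained in the automorphism groups. Then in the exterior quotient B̃ = B/I, every morphism is an epimorphism. -/

import Mathlib

open CategoryTheory Limits

universe v u

/-- Objects of the additive cover `ac(B)`: finite families of `B`-objects. -/
structure ACObj (B : Type u) : Type (u + 1) where
  I : Type
  [fin : Finite I]
  obj : I → B

attribute [instance] ACObj.fin

/-- Morphisms of the additive cover. -/
structure ACHom {B : Type u} [Category.{v} B] (X Y : ACObj B) where
  f : X.I → Y.I
  φ : ∀ j : X.I, X.obj j ⟶ Y.obj (f j)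

/-- The additive cover `ac(B)` of a category `B`. -/
instance ACCategory (B : Type u) [Category.{v} B] : Category (ACObj B) where
  Hom := ACHom
  id X := ⟨fun j => j, fun j => 𝟙 _⟩
  comp {X Y Z} g h := ⟨fun j => h.f (g.f j), fun j => g.φ j ≫ h.φ (g.f j)⟩
  id_comp f := by
    cases f with
    | mk ff φ => simp only [Category.id_comp]
  comp_id f := by
    cases f with
    | mk ff φ => simp only [Category.comp_id]
  assoc f g h := by
    cases f; cases g; cases h; simp only [Category.assoc]

/-- The hom-relation defining the exterior quotient `B̃ = B/I` of `B` by an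
interior structure `I`: two morphisms `R ⟶ Q` are identified when they differ by
post-composition with an automorphism in `I(Q)`. -/
def extRel {B : Type u} [Category.{v} B] (I : ∀ Q : B, Subgroup (Aut Q)) :
    HomRel B :=
  fun {_ Q} f g => ∃ χ ∈ I Q, g = f ≫ χ.hom


/-! Suppose `φ ≫ δ = φ ≫ γ ≫ ε`. In `ac(B)` the maps `lift γ δ : Q ⟶ S × T` and
`lift (𝟙 S) ε : S ⟶ S × T` agree after precomposition with `φ`, so they land in the same
summand `P_j` of the product. As `𝟙 S` factors as `S ⟶ P_j ⟶ S`, orderedness makes the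
projection `P_j ⟶ S` an isomorphism, and reading off the second components gives
`δ = γ ≫ ε`. With `ε` an automorphism in `I(S)` this is left cancellation for the relation
defining `B̃`, so every morphism of `B̃` is an epimorphism. -/

def IsOrderedCategory (B : Type u) [Category.{v} B] : Prop :=
  ∀ Q R : B, Nonempty (R ⟶ Q) → Nonempty (Q ⟶ R) → ∀ f : R ⟶ Q, IsIso f

theorem IsOrderedCategory.comp_eq_id_of_comp_eq_id {B : Type u} [Category.{v} B]
    (hB : IsOrderedCategory B) {X Y : B} {s : X ⟶ Y} {r : Y ⟶ X} (h : s ≫ r = 𝟙 X) :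
    r ≫ s = 𝟙 Y := by
  have := hB _ _ ⟨s⟩ ⟨r⟩ s
  rw [IsIso.eq_inv_of_hom_inv_id h, IsIso.inv_hom_id]

namespace ACObj

variable {B : Type u} [Category.{v} B]

def single (S : B) : ACObj B :=
  { I := Unit, obj := fun _ => S }

end ACObj

namespace ACHom

variable {B : Type u} [Category.{v} B]

def single {Q S : B} (α : Q ⟶ S) : ACObj.single Q ⟶ ACObj.single S :=
  ⟨fun _ => (), fun _ => α⟩

theorem single_comp {Q S T : B} (α : Q ⟶ S) (β : S ⟶ T) :
    single α ≫ single β = single (α ≫ β) := rfl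

theorem single_injective {Q S : B} : Function.Injective (single : (Q ⟶ S) → _) :=
  fun _ _ h => by
    injection h with _ hφ
    exact congrFun hφ ()

theorem index_eq_of_single_comp_eq {R Q S : B} {P : ACObj B} {ψ : R ⟶ Q} {ψ' : R ⟶ S}
    {g : ACObj.single Q ⟶ P} {g' : ACObj.single S ⟶ P}
    (h : single ψ ≫ g = single ψ' ≫ g') : g.f () = g'.f () :=
  congrArg (fun k : ACObj.single R ⟶ P => k.f ()) h

theorem exists_comp_eq_single {Q : B} {P : ACObj B} (g : ACObj.single Q ⟶ P) (j : P.I)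
    (hj : g.f () = j) :
    ∃ a : Q ⟶ P.obj j, ∀ {S : B} (p : P ⟶ ACObj.single S), g ≫ p = single (a ≫ p.φ j) := by
  subst hj
  exact ⟨g.φ (), fun _ => rfl⟩

end ACHom

open ACObj ACHom in
theorem IsOrderedCategory.eq_comp_of_comp_eq {B : Type u} [Category.{v} B]
    (hB : IsOrderedCategory B) [HasBinaryProducts (ACObj B)] {R Q S T : B}
    (φ : R ⟶ Q) (γ : Q ⟶ S) (δ : Q ⟶ T) (ε : S ⟶ T) (h : φ ≫ δ = (φ ≫ γ) ≫ ε) :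
    δ = γ ≫ ε := by
  let lam : single Q ⟶ single S ⨯ single T := prod.lift (ACHom.single γ) (ACHom.single δ)
  let mu : single S ⟶ single S ⨯ single T := prod.lift (ACHom.single (𝟙 S)) (ACHom.single ε)
  have hfactor : ACHom.single φ ≫ lam = ACHom.single (φ ≫ γ) ≫ mu := by
    apply prod.hom_ext
    · simp only [lam, mu, Category.assoc, prod.lift_fst, single_comp, Category.comp_id]
    · simp only [lam, mu, Category.assoc, prod.lift_snd, single_comp, h]
  set j := mu.f ()
  obtain ⟨a, ha⟩ := exists_comp_eq_single lam j (index_eq_of_single_comp_eq hfactor)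
  obtain ⟨b, hb⟩ := exists_comp_eq_single mu j rfl
  let fst_j : _ ⟶ S := (prod.fst : single S ⨯ single T ⟶ single S).φ j
  let snd_j : _ ⟶ T := (prod.snd : single S ⨯ single T ⟶ single T).φ j
  have hγ : a ≫ fst_j = γ := single_injective ((ha _).symm.trans (prod.lift_fst _ _))
  have hδ : a ≫ snd_j = δ := single_injective ((ha _).symm.trans (prod.lift_snd _ _))
  have hb₁ : b ≫ fst_j = 𝟙 S := single_injective ((hb _).symm.trans (prod.lift_fst _ _))
  have hε : b ≫ snd_j = ε := single_injective ((hb _).symm.trans (prod.lift_snd _ _))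
  calc δ = a ≫ (fst_j ≫ b) ≫ snd_j := by
          rw [hB.comp_eq_id_of_comp_eq_id hb₁, Category.id_comp, hδ]
    _ = (a ≫ fst_j) ≫ b ≫ snd_j := by simp only [Category.assoc]
    _ = γ ≫ ε := by rw [hγ, hε]

def IsInteriorStructure {B : Type u} [Category.{v} B] (I : ∀ Q : B, Subgroup (Aut Q)) : Prop :=
  ∀ {R Q : B} (φ : R ⟶ Q), ∀ ρ ∈ I R, ∃ χ ∈ I Q, ρ.hom ≫ φ = φ ≫ χ.hom

section ExteriorQuotient

variable {B : Type u} [Category.{v} B] {I : ∀ Q : B, Subgroup (Aut Q)}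

theorem extRel_equivalence {X Y : B} : _root_.Equivalence (@extRel B _ I X Y) where
  refl f := ⟨1, one_mem _, (Category.comp_id f).symm⟩
  symm := by
    rintro f _ ⟨χ, hχ, rfl⟩
    exact ⟨χ⁻¹, inv_mem hχ, by erw [Category.assoc, Iso.hom_inv_id, Category.comp_id]⟩
  trans := by
    rintro f _ _ ⟨χ, hχ, rfl⟩ ⟨χ', hχ', rfl⟩
    exact ⟨χ' * χ, mul_mem hχ' hχ, Category.assoc _ _ _⟩

theorem extRel_congruence (hI : IsInteriorStructure I) : Congruence (extRel I) where
  equivalence := extRel_equivalence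
  comp_left := by
    rintro X Y Z f g _ ⟨χ, hχ, rfl⟩
    exact ⟨χ, hχ, by simp⟩
  comp_right := by
    rintro X Y Z f _ g ⟨χ, hχ, rfl⟩
    obtain ⟨χ', hχ', hcomm⟩ := hI g χ hχ
    exact ⟨χ', hχ', by rw [Category.assoc, hcomm, Category.assoc]⟩

theorem extRel_of_extRel_comp (hB : IsOrderedCategory B) [HasBinaryProducts (ACObj B)]
    {R Q S : B} (φ : R ⟶ Q) (γ δ : Q ⟶ S) (h : extRel I (φ ≫ γ) (φ ≫ δ)) : extRel I γ δ := by
  obtain ⟨χ, hχ, hc⟩ := h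
  exact ⟨χ, hχ, hB.eq_comp_of_comp_eq φ γ δ χ.hom hc⟩

end ExteriorQuotient

theorem CategoryTheory.Quotient.epi_of_rel_of_rel_comp {C : Type*} [Category* C] {r : HomRel C}
    [Congruence r] (hr : ∀ {X Y Z : C} (f : X ⟶ Y) (g g' : Y ⟶ Z), r (f ≫ g) (f ≫ g') → r g g')
    {X Y : Quotient r} (f : X ⟶ Y) : Epi f := by
  induction f using Quotient.induction with
  | h f =>
    refine ⟨fun g g' w => ?_⟩
    obtain ⟨g, rfl⟩ := (functor r).map_surjective g
    obtain ⟨g', rfl⟩ := (functor r).map_surjective g'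
    rw [← Functor.map_comp, ← Functor.map_comp, functor_map_eq_iff] at w
    exact Quotient.sound r (hr f g g' w)

theorem exterior_quotient_epi_general
    {B : Type u} [Category.{v} B]
    (hord : ∀ Q R : B, Nonempty (R ⟶ Q) → Nonempty (Q ⟶ R) →
      ∀ f : R ⟶ Q, IsIso f)
    [HasBinaryProducts (ACObj B)]
    (I : ∀ Q : B, Subgroup (Aut Q))
    (hI : ∀ {R Q : B} (φ : R ⟶ Q), ∀ ρ ∈ I R, ∃ χ ∈ I Q,
      ρ.hom ≫ φ = φ ≫ χ.hom) :
    ∀ {X Y : CategoryTheory.Quotient (extRel I)} (f : X ⟶ Y), Epi f := by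
  have := extRel_congruence (I := I) @hI
  intro X Y f
  exact Quotient.epi_of_rel_of_rel_comp (extRel_of_extRel_comp hord) f

/-- If `B` is an ordered category with finitely many objects and finite
hom-sets whose additive cover has binary products (`B` is multiplicative), and
`I` is an interior structure of `B`, then every morphism of the exterior
quotient `B̃ = B/I` is an epimorphism. -/
theorem exterior_quotient_epi
    {B : Type u} [Category.{v} B] [Finite B]
    (hfin : ∀ Q R : B, Finite (Q ⟶ R))
    (hord : ∀ Q R : B, Nonempty (R ⟶ Q) → Nonempty (Q ⟶ R) →
      ∀ f : R ⟶ Q, IsIso f)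
    [HasBinaryProducts (ACObj B)]
    (I : ∀ Q : B, Subgroup (Aut Q))
    (hI : ∀ {R Q : B} (φ : R ⟶ Q), ∀ ρ ∈ I R, ∃ χ ∈ I Q,
      ρ.hom ≫ φ = φ ≫ χ.hom) :
    ∀ {X Y : CategoryTheory.Quotient (extRel I)} (f : X ⟶ Y), Epi f :=
  exterior_quotient_epi_general hord I hI
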